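/- arXiv:2004.02027 — 2 statements merged into one kernel-verified Lean document; each statement's English description precedes it below -/
import Mathlib

section
/- Let k_h(x,y) be defined on ℝ²×ℝ² by k_h(x,y) = 0 if |x−y| < |h| and k_h(x,y) = 1/√(|x−y|² − h²) if |x−y| ≥ |h|. Then for every h ∈ ℝ, ∫_{|y| ≤ 2} |k_0(0,y) − k_h(0,y)| dy ≤ 4π |h|. -/
open MeasureTheory Real Set Filter

noncomputable section

/-- The unit direction vector `θ(φ) = (cos φ, sin φ)`. -/
def dirv (φ : ℝ) : ℝ × ℝ := (Real.cos φ, Real.sin φ)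

/-- The perpendicular direction `θ(φ)^⊥ = (−sin φ, cos φ)`. -/
def dirp (φ : ℝ) : ℝ × ℝ := (-Real.sin φ, Real.cos φ)

/-- Euclidean inner product on `ℝ²`. -/
def dot2 (x y : ℝ × ℝ) : ℝ := x.1 * y.1 + x.2 * y.2

/-- The open unit disk `Ω = B(0,1) ⊂ ℝ²`. -/
def unitDisk : Set (ℝ × ℝ) := {x : ℝ × ℝ | x.1 ^ 2 + x.2 ^ 2 < 1}

/-- The Radon transform `[R f](s,φ) = ∫ f(s θ(φ) + t θ(φ)^⊥) dt`. -/
def Radon (f : ℝ × ℝ → ℝ) (s φ : ℝ) : ℝ := ∫ t : ℝ, f (s • dirv φ + t • dirp φ)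

/-- The backprojection `[R* g](x) = ∫_{S¹} g(x·θ(φ), φ) dφ`. -/
def Backproj (g : ℝ → ℝ → ℝ) (x : ℝ × ℝ) : ℝ := ∫ φ in Ioc (-π) π, g (dot2 x (dirv φ)) φ

/-- `L²` norm of an image on the plane (for images supported in the unit disk,
this is the `L²(Ω)` norm). -/
def nImg (f : ℝ × ℝ → ℝ) : ℝ := (∫ x : ℝ × ℝ, f x ^ 2) ^ (1/2 : ℝ)

/-- `L²(Ω)` norm of an image restricted to the unit disk. -/
def nImgD (f : ℝ × ℝ → ℝ) : ℝ := (∫ x in unitDisk, f x ^ 2) ^ (1/2 : ℝ)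

/-- `L²(ℝ × S¹)` norm of a sinogram. -/
def nSino (g : ℝ → ℝ → ℝ) : ℝ := (∫ φ in Ioc (-π) π, ∫ s : ℝ, g s φ ^ 2) ^ (1/2 : ℝ)

/-- `L²(Ω')` norm, `Ω' = (−1,1) × S¹`. -/
def nSinoD (g : ℝ → ℝ → ℝ) : ℝ :=
  (∫ φ in Ioc (-π) π, ∫ s in Ioo (-1 : ℝ) 1, g s φ ^ 2) ^ (1/2 : ℝ)

/-- `L²` modulus of continuity of a sinogram: offset shift `h`, angular shift `γ`. -/
def modCont (g : ℝ → ℝ → ℝ) (h γ : ℝ) : ℝ :=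
  (∫ φ in Ioc (-π) π, ∫ s : ℝ, (g (s + h) (φ + γ) - g s φ) ^ 2) ^ (1/2 : ℝ)

/-- `sup_{|h| < r} ω_g(h, 0)`. -/
def supMod (g : ℝ → ℝ → ℝ) (r : ℝ) : ℝ :=
  sSup ((fun h => modCont g h 0) '' Ioo (-r) r)

/-- `f` vanishes outside the unit disk. -/
def SuppDisk (f : ℝ × ℝ → ℝ) : Prop := ∀ x, x ∉ unitDisk → f x = 0

/-- `g` vanishes for offsets outside `(−1, 1)`. -/
def SuppSino (g : ℝ → ℝ → ℝ) : Prop := ∀ s φ, s ∉ Ioo (-1 : ℝ) 1 → g s φ = 0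

/-- `g` is `2π`-periodic in the angular variable, i.e. a function on `ℝ × S¹`. -/
def PeriodicSino (g : ℝ → ℝ → ℝ) : Prop := ∀ s φ, g s (φ + 2 * π) = g s φ

/-- `f ∈ L²(ℝ²)`. -/
def L2Img (f : ℝ × ℝ → ℝ) : Prop := MemLp f 2 (volume : Measure (ℝ × ℝ))

/-- `g ∈ L²(ℝ × S¹)`. -/
def L2Sino (g : ℝ → ℝ → ℝ) : Prop :=
  MemLp (fun z : ℝ × ℝ => g z.1 z.2) 2
    ((volume : Measure (ℝ × ℝ)).restrict (univ ×ˢ Ioc (-π) π))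

/-- The hat profile `w_δ(t) = max(0, δ − |t|)`. -/
def hatw (δ t : ℝ) : ℝ := max 0 (δ - |t|)

/-- Detector centers `s_p = δ_s (p − (P+1)/2)`. -/
def sCen (δs : ℝ) (P p : ℕ) : ℝ := δs * ((p : ℝ) - ((P : ℝ) + 1) / 2)

/-- Detector cells `S_p = s_p + [−δ_s/2, δ_s/2)`. -/
def sCell (δs : ℝ) (P p : ℕ) : Set ℝ := Ico (sCen δs P p - δs / 2) (sCen δs P p + δs / 2)

/-- The detector cells cover `(−1, 1)`. -/
def CoversI (δs : ℝ) (P : ℕ) : Prop := Ioo (-1 : ℝ) 1 ⊆ ⋃ p ∈ Finset.Icc 1 P, sCell δs P p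

/-- Offset-discretized Radon transform `R_{δ_s}`. -/
def RadonS (δs : ℝ) (P : ℕ) (f : ℝ × ℝ → ℝ) (s φ : ℝ) : ℝ :=
  (δs ^ 2)⁻¹ * ∑ p ∈ Finset.Icc 1 P,
    Set.indicator (sCell δs P p) (fun _ => (1 : ℝ)) s *
      ∫ t : ℝ, hatw δs (t - sCen δs P p) * Radon f t φ

/-- The adjoint of `R_{δ_s}`. -/
def RadonSStar (δs : ℝ) (P : ℕ) (g : ℝ → ℝ → ℝ) (x : ℝ × ℝ) : ℝ :=
  (δs ^ 2)⁻¹ * ∑ p ∈ Finset.Icc 1 P,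
    ∫ φ in Ioc (-π) π,
      hatw δs (dot2 x (dirv φ) - sCen δs P p) * ∫ s in sCell δs P p, g s φ

/-- A valid full angular grid `φ_1 < … < φ_Q` in `[−π, π)` with the wrap-around
conventions `φ_0 = φ_Q − 2π` and `φ_{Q+1} = φ_1 + 2π`. -/
structure AngGrid (Q : ℕ) (φs : ℕ → ℝ) : Prop where
  one_le : 1 ≤ Q
  mono : ∀ q, 1 ≤ q → q < Q → φs q < φs (q + 1)
  mem : ∀ q, 1 ≤ q → q ≤ Q → φs q ∈ Ico (-π) π
  wrap0 : φs 0 = φs Q - 2 * π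
  wrapQ : φs (Q + 1) = φs 1 + 2 * π

/-- `δφ` bounds all angular gaps of the grid (it holds for `δφ` the maximal gap). -/
def GapLe (Q : ℕ) (φs : ℕ → ℝ) (δφ : ℝ) : Prop :=
  ∀ q, 1 ≤ q → q ≤ Q → φs (q + 1) - φs q ≤ δφ

/-- The angular cell `Θ_q`, taken modulo `2π`. -/
def angCell (φs : ℕ → ℝ) (q : ℕ) : Set ℝ :=
  {φ : ℝ | ∃ k : ℤ, φ + 2 * π * (k : ℝ) ∈
    Ico ((φs (q - 1) + φs q) / 2) ((φs q + φs (q + 1)) / 2)}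

/-- Offset- and angle-discretized Radon transform `R_{δ_s, δ_φ}`. -/
def RadonSA (δs : ℝ) (P Q : ℕ) (φs : ℕ → ℝ) (f : ℝ × ℝ → ℝ) (s φ : ℝ) : ℝ :=
  (δs ^ 2)⁻¹ * ∑ q ∈ Finset.Icc 1 Q, ∑ p ∈ Finset.Icc 1 P,
    Set.indicator (sCell δs P p) (fun _ => (1 : ℝ)) s *
    Set.indicator (angCell φs q) (fun _ => (1 : ℝ)) φ *
    ∫ x in unitDisk, hatw δs (dot2 x (dirv (φs q)) - sCen δs P p) * f x

/-- Pixel centers `x_{ij}`. -/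
def pixCen (δx : ℝ) (N M i j : ℕ) : ℝ × ℝ :=
  (δx * ((i : ℝ) - ((N : ℝ) + 1) / 2), δx * ((j : ℝ) - ((M : ℝ) + 1) / 2))

/-- Pixels `X_{ij} = x_{ij} + [−δ_x/2, δ_x/2)²`. -/
def pixCell (δx : ℝ) (N M i j : ℕ) : Set (ℝ × ℝ) :=
  Ico ((pixCen δx N M i j).1 - δx / 2) ((pixCen δx N M i j).1 + δx / 2) ×ˢ
    Ico ((pixCen δx N M i j).2 - δx / 2) ((pixCen δx N M i j).2 + δx / 2)

/-- The pixels cover the unit disk. -/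
def CoversDisk (δx : ℝ) (N M : ℕ) : Prop :=
  unitDisk ⊆ ⋃ i ∈ Finset.Icc 1 N, ⋃ j ∈ Finset.Icc 1 M, pixCell δx N M i j

/-- The fully discrete (pixel-driven) Radon transform `R^{δ_x}_{δ_s, δ_φ}`. -/
def RadonFull (δs : ℝ) (P Q : ℕ) (φs : ℕ → ℝ) (δx : ℝ) (N M : ℕ)
    (f : ℝ × ℝ → ℝ) (s φ : ℝ) : ℝ :=
  (δs ^ 2)⁻¹ * ∑ q ∈ Finset.Icc 1 Q, ∑ p ∈ Finset.Icc 1 P,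
    Set.indicator (sCell δs P p) (fun _ => (1 : ℝ)) s *
    Set.indicator (angCell φs q) (fun _ => (1 : ℝ)) φ *
    ∑ i ∈ Finset.Icc 1 N, ∑ j ∈ Finset.Icc 1 M,
      hatw δs (dot2 (pixCen δx N M i j) (dirv (φs q)) - sCen δs P p) *
        ∫ x in pixCell δx N M i j, f x

/-- The adjoint of the fully discrete Radon transform (pixel-driven backprojection). -/
def RadonFullStar (δs : ℝ) (P Q : ℕ) (φs : ℕ → ℝ) (δx : ℝ) (N M : ℕ)
    (g : ℝ → ℝ → ℝ) (x : ℝ × ℝ) : ℝ :=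
  ∑ i ∈ Finset.Icc 1 N, ∑ j ∈ Finset.Icc 1 M,
    Set.indicator (pixCell δx N M i j) (fun _ => (1 : ℝ)) x *
    ((δs ^ 2)⁻¹ * ∑ q ∈ Finset.Icc 1 Q, ∑ p ∈ Finset.Icc 1 P,
      hatw δs (dot2 (pixCen δx N M i j) (dirv (φs q)) - sCen δs P p) *
        ∫ φ in Ico ((φs (q - 1) + φs q) / 2) ((φs q + φs (q + 1)) / 2),
          ∫ s in sCell δs P p, g s φ)

/- ---------- sparse / limited angle ---------- -/

/-- Limited-angle angular grid on `A = (φ_1, φ_Q)` with `φ_0 = φ_1`, `φ_{Q+1} = φ_Q`. -/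
structure AngGridA (Q : ℕ) (φs : ℕ → ℝ) : Prop where
  two_le : 2 ≤ Q
  mono : ∀ q, 1 ≤ q → q < Q → φs q < φs (q + 1)
  mem : ∀ q, 1 ≤ q → q ≤ Q → φs q ∈ Ico (-π) π
  wrap0 : φs 0 = φs 1
  wrapQ : φs (Q + 1) = φs Q

/-- `L²(Ω'_A)` norm, `Ω'_A = (−1,1) × A` with `A = (a,b)`. -/
def nSinoA (a b : ℝ) (g : ℝ → ℝ → ℝ) : ℝ :=
  (∫ φ in Ioo a b, ∫ s in Ioo (-1 : ℝ) 1, g s φ ^ 2) ^ (1/2 : ℝ)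

/-- Limited-angle backprojection `(R^A)*`. -/
def BackprojA (a b : ℝ) (g : ℝ → ℝ → ℝ) (x : ℝ × ℝ) : ℝ :=
  ∫ φ in Ioo a b, g (dot2 x (dirv φ)) φ

/-- `g ∈ L²((−1,1) × A)` (as a function on `ℝ × A`). -/
def L2SinoA (a b : ℝ) (g : ℝ → ℝ → ℝ) : Prop :=
  MemLp (fun z : ℝ × ℝ => g z.1 z.2) 2
    ((volume : Measure (ℝ × ℝ)).restrict (univ ×ˢ Ioo a b))

/-- limited-angle modulus of continuity `ω_g(h, 0)` on `ℝ × A`. -/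
def modContA (a b : ℝ) (g : ℝ → ℝ → ℝ) (h : ℝ) : ℝ :=
  (∫ φ in Ioo a b, ∫ s : ℝ, (g (s + h) φ - g s φ) ^ 2) ^ (1/2 : ℝ)

/-- Sparse-angle `L²(Ω'_F)` norm (counting measure in the angular direction). -/
def nSinoF (Q : ℕ) (φs : ℕ → ℝ) (g : ℝ → ℝ → ℝ) : ℝ :=
  (∑ q ∈ Finset.Icc 1 Q, ∫ s in Ioo (-1 : ℝ) 1, g s (φs q) ^ 2) ^ (1/2 : ℝ)

/-- Sparse-angle modulus of continuity `ω_g(h, 0)`. -/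
def modContF (Q : ℕ) (φs : ℕ → ℝ) (g : ℝ → ℝ → ℝ) (h : ℝ) : ℝ :=
  (∑ q ∈ Finset.Icc 1 Q, ∫ s : ℝ, (g (s + h) (φs q) - g s (φs q)) ^ 2) ^ (1/2 : ℝ)

/-- Sparse-angle backprojection `(R^F)* g (x) = Σ_q g(x·θ_q, φ_q)`. -/
def BackprojF (Q : ℕ) (φs : ℕ → ℝ) (g : ℝ → ℝ → ℝ) (x : ℝ × ℝ) : ℝ :=
  ∑ q ∈ Finset.Icc 1 Q, g (dot2 x (dirv (φs q))) (φs q)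

/-- The discrete sparse-angle Radon transform at a single angle `θang`. -/
def RadonSparse (δs : ℝ) (P : ℕ) (δx : ℝ) (N M : ℕ) (θang : ℝ)
    (f : ℝ × ℝ → ℝ) (s : ℝ) : ℝ :=
  (δs ^ 2)⁻¹ * ∑ p ∈ Finset.Icc 1 P,
    Set.indicator (sCell δs P p) (fun _ => (1 : ℝ)) s *
    ∑ i ∈ Finset.Icc 1 N, ∑ j ∈ Finset.Icc 1 M,
      hatw δs (dot2 (pixCen δx N M i j) (dirv θang) - sCen δs P p) *
        ∫ x in pixCell δx N M i j, f x

/-- Adjoint of the discrete sparse-angle Radon transform. -/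
def RadonSparseStar (δs : ℝ) (P : ℕ) (δx : ℝ) (N M Q : ℕ) (φs : ℕ → ℝ)
    (g : ℝ → ℝ → ℝ) (x : ℝ × ℝ) : ℝ :=
  ∑ i ∈ Finset.Icc 1 N, ∑ j ∈ Finset.Icc 1 M,
    Set.indicator (pixCell δx N M i j) (fun _ => (1 : ℝ)) x *
    ((δs ^ 2)⁻¹ * ∑ q ∈ Finset.Icc 1 Q, ∑ p ∈ Finset.Icc 1 P,
      hatw δs (dot2 (pixCen δx N M i j) (dirv (φs q)) - sCen δs P p) *
        ∫ s in sCell δs P p, g s (φs q))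

/- ---------- fanbeam ---------- -/

/-- Detector width `W = 2R/√(R_E² − 1)`. -/
def Wfan (RE R : ℝ) : ℝ := 2 * R / Real.sqrt (RE ^ 2 - 1)

/-- The fanbeam transform `F`. -/
def Fanbeam (RE R : ℝ) (f : ℝ × ℝ → ℝ) (ξ α : ℝ) : ℝ :=
  Real.sqrt (ξ ^ 2 + R ^ 2) *
    ∫ t : ℝ, f (t • (ξ • dirv α + R • dirp α) - RE • dirp α)

/-- The unweighted fanbeam transform `G`. -/
def GFan (RE R : ℝ) (f : ℝ × ℝ → ℝ) (ξ α : ℝ) : ℝ :=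
  ∫ t : ℝ, f (t • (ξ • dirv α + R • dirp α) - RE • dirp α)

/-- Fan projection coordinate `ξ(x, α) = x·θ(α) R / (x·θ(α)^⊥ + R_E)`. -/
def fanProj (RE R : ℝ) (x : ℝ × ℝ) (α : ℝ) : ℝ :=
  dot2 x (dirv α) * R / (dot2 x (dirp α) + RE)

/-- Adjoint `G*` of the unweighted fanbeam transform. -/
def GFanStar (RE R : ℝ) (g : ℝ → ℝ → ℝ) (x : ℝ × ℝ) : ℝ :=
  ∫ α in Ioc (-π) π, (dot2 x (dirp α) + RE)⁻¹ * g (fanProj RE R x α) α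

/-- Adjoint `F*` of the fanbeam transform. -/
def FanbeamStar (RE R : ℝ) (g : ℝ → ℝ → ℝ) (x : ℝ × ℝ) : ℝ :=
  ∫ α in Ioc (-π) π,
    Real.sqrt (fanProj RE R x α ^ 2 + R ^ 2) * (dot2 x (dirp α) + RE)⁻¹ *
      g (fanProj RE R x α) α

/-- `L²(Ω')` norm for the fanbeam geometry, `Ω' = (−W/2, W/2) × S¹`. -/
def nSinoW (RE R : ℝ) (g : ℝ → ℝ → ℝ) : ℝ :=
  (∫ α in Ioc (-π) π, ∫ ξ in Ioo (-(Wfan RE R) / 2) (Wfan RE R / 2), g ξ α ^ 2) ^ (1/2 : ℝ)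

/-- `g` vanishes for offsets outside `(−W/2, W/2)`. -/
def SuppSinoW (RE R : ℝ) (g : ℝ → ℝ → ℝ) : Prop :=
  ∀ ξ α, ξ ∉ Ioo (-(Wfan RE R) / 2) (Wfan RE R / 2) → g ξ α = 0

/-- `g ∈ L²((−W/2, W/2) × S¹)`. -/
def L2SinoW (RE R : ℝ) (g : ℝ → ℝ → ℝ) : Prop :=
  MemLp (fun z : ℝ × ℝ => g z.1 z.2) 2
    ((volume : Measure (ℝ × ℝ)).restrict
      (Ioo (-(Wfan RE R) / 2) (Wfan RE R / 2) ×ˢ Ioc (-π) π))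

/-- Offset-discretized unweighted fanbeam transform `G_{δ_ξ}`, `δ_ξ = W/P`. -/
def GFanS (RE R : ℝ) (P : ℕ) (f : ℝ × ℝ → ℝ) (ξ α : ℝ) : ℝ :=
  ((Wfan RE R / P) ^ 2)⁻¹ * ∑ p ∈ Finset.Icc 1 P,
    Set.indicator (sCell (Wfan RE R / P) P p) (fun _ => (1 : ℝ)) ξ *
      ∫ x in unitDisk,
        hatw (Wfan RE R / P) (fanProj RE R x α - sCen (Wfan RE R / P) P p) *
          f x / (dot2 x (dirp α) + RE)

/-- Adjoint of `G_{δ_ξ}`. -/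
def GFanSStar (RE R : ℝ) (P : ℕ) (g : ℝ → ℝ → ℝ) (x : ℝ × ℝ) : ℝ :=
  ((Wfan RE R / P) ^ 2)⁻¹ * ∑ p ∈ Finset.Icc 1 P,
    ∫ α in Ioc (-π) π,
      hatw (Wfan RE R / P) (fanProj RE R x α - sCen (Wfan RE R / P) P p) *
        (dot2 x (dirp α) + RE)⁻¹ *
        ∫ ξ in sCell (Wfan RE R / P) P p, g ξ α

/-- Offset- and angle-discretized `G_{δ_ξ, δ_α}`. -/
def GFanSA (RE R : ℝ) (P Q : ℕ) (αs : ℕ → ℝ) (f : ℝ × ℝ → ℝ) (ξ α : ℝ) : ℝ :=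
  ((Wfan RE R / P) ^ 2)⁻¹ * ∑ p ∈ Finset.Icc 1 P, ∑ q ∈ Finset.Icc 1 Q,
    Set.indicator (sCell (Wfan RE R / P) P p) (fun _ => (1 : ℝ)) ξ *
    Set.indicator (angCell αs q) (fun _ => (1 : ℝ)) α *
      ∫ x in unitDisk,
        hatw (Wfan RE R / P) (fanProj RE R x (αs q) - sCen (Wfan RE R / P) P p) *
          f x / (dot2 x (dirp (αs q)) + RE)

/-- Fully discrete unweighted fanbeam transform `G^{δ_x}_{δ_ξ, δ_α}`. -/
def GFanFull (RE R : ℝ) (P Q : ℕ) (αs : ℕ → ℝ) (δx : ℝ) (N M : ℕ)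
    (f : ℝ × ℝ → ℝ) (ξ α : ℝ) : ℝ :=
  ((Wfan RE R / P) ^ 2)⁻¹ * ∑ p ∈ Finset.Icc 1 P, ∑ q ∈ Finset.Icc 1 Q,
    Set.indicator (sCell (Wfan RE R / P) P p) (fun _ => (1 : ℝ)) ξ *
    Set.indicator (angCell αs q) (fun _ => (1 : ℝ)) α *
    ∑ i ∈ Finset.Icc 1 N, ∑ j ∈ Finset.Icc 1 M,
      hatw (Wfan RE R / P)
          (fanProj RE R (pixCen δx N M i j) (αs q) - sCen (Wfan RE R / P) P p) *
        (dot2 (pixCen δx N M i j) (dirp (αs q)) + RE)⁻¹ *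
        ∫ x in pixCell δx N M i j, f x

/-- Fully discrete pixel-driven fanbeam transform `F^{δ_x}_{δ_ξ, δ_α}`. -/
def FanFull (RE R : ℝ) (P Q : ℕ) (αs : ℕ → ℝ) (δx : ℝ) (N M : ℕ)
    (f : ℝ × ℝ → ℝ) (ξ α : ℝ) : ℝ :=
  ((Wfan RE R / P) ^ 2)⁻¹ * ∑ p ∈ Finset.Icc 1 P, ∑ q ∈ Finset.Icc 1 Q,
    Set.indicator (sCell (Wfan RE R / P) P p) (fun _ => (1 : ℝ)) ξ *
    Set.indicator (angCell αs q) (fun _ => (1 : ℝ)) α *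
    Real.sqrt (sCen (Wfan RE R / P) P p ^ 2 + R ^ 2) *
    ∑ i ∈ Finset.Icc 1 N, ∑ j ∈ Finset.Icc 1 M,
      hatw (Wfan RE R / P)
          (fanProj RE R (pixCen δx N M i j) (αs q) - sCen (Wfan RE R / P) P p) *
        (dot2 (pixCen δx N M i j) (dirp (αs q)) + RE)⁻¹ *
        ∫ x in pixCell δx N M i j, f x

/-- Adjoint of the fully discrete pixel-driven fanbeam transform. -/
def FanFullStar (RE R : ℝ) (P Q : ℕ) (αs : ℕ → ℝ) (δx : ℝ) (N M : ℕ)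
    (g : ℝ → ℝ → ℝ) (x : ℝ × ℝ) : ℝ :=
  ∑ i ∈ Finset.Icc 1 N, ∑ j ∈ Finset.Icc 1 M,
    Set.indicator (pixCell δx N M i j) (fun _ => (1 : ℝ)) x *
    (((Wfan RE R / P) ^ 2)⁻¹ * ∑ q ∈ Finset.Icc 1 Q, ∑ p ∈ Finset.Icc 1 P,
      hatw (Wfan RE R / P)
          (fanProj RE R (pixCen δx N M i j) (αs q) - sCen (Wfan RE R / P) P p) *
        Real.sqrt (sCen (Wfan RE R / P) P p ^ 2 + R ^ 2) *
        (dot2 (pixCen δx N M i j) (dirp (αs q)) + RE)⁻¹ *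
        ∫ α in Ico ((αs (q - 1) + αs q) / 2) ((αs q + αs (q + 1)) / 2),
          ∫ ξ in sCell (Wfan RE R / P) P p, g ξ α)


/-- The kernel `k_h(x,y)`: `0` if `|x − y| < |h|`, else `1/√(|x − y|² − h²)`. -/
def kfun (h : ℝ) (x y : ℝ × ℝ) : ℝ :=
  if Real.sqrt ((x.1 - y.1) ^ 2 + (x.2 - y.2) ^ 2) < |h| then 0
  else 1 / Real.sqrt ((x.1 - y.1) ^ 2 + (x.2 - y.2) ^ 2 - h ^ 2)

/-!
The integrand is radial: at distance `r` from the origin it equals `|1/r - k_h(r)|`, where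
`k_h(r) = 0` for `r < |h|` and `k_h(r) = 1/√(r² - h²)` beyond. In polar coordinates the integral
(even over the whole plane) becomes `2π ∫₀^∞ r |1/r - k_h(r)| dr`. On `(0, |h|]` the radial
integrand is `1`; on `(|h|, ∞)` it is `r/√(r² - h²) - 1`, the derivative of the increasing
function `√(r² - h²) - r`, which runs from `-|h|` to values below `0`. Each part contributes at
most `|h|`, so the integral is at most `2π · 2|h|`.
-/

open scoped ENNReal

theorem lintegral_comp_sqrt_sq_add_sq {g : ℝ → ℝ≥0∞} (hg : Measurable g) :
    ∫⁻ y : ℝ × ℝ, g √(y.1 ^ 2 + y.2 ^ 2) =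
      ENNReal.ofReal (2 * π) * ∫⁻ r in Ioi 0, ENNReal.ofReal r * g r := by
  have hr : ∀ p ∈ polarCoord.target,
      √((polarCoord.symm p).1 ^ 2 + (polarCoord.symm p).2 ^ 2) = p.1 := fun p hp => by
    simpa using congrArg Prod.fst (polarCoord.right_inv hp)
  rw [← lintegral_comp_polarCoord_symm,
    setLIntegral_congr_fun polarCoord.open_target.measurableSet fun p hp => by rw [hr p hp],
    polarCoord_target, Measure.volume_eq_prod, ← Measure.prod_restrict,
    lintegral_prod _ (by fun_prop)]
  simp only [smul_eq_mul, setLIntegral_const, Real.volume_Ioo]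
  rw [lintegral_mul_const' _ _ ENNReal.ofReal_ne_top, mul_comm, sub_neg_eq_add, ← two_mul]

def radialKernel (c ρ : ℝ) : ℝ := if ρ < |c| then 0 else 1 / √(ρ ^ 2 - c ^ 2)

theorem kfun_zero_left (c : ℝ) (y : ℝ × ℝ) :
    kfun c (0, 0) y = radialKernel c √(y.1 ^ 2 + y.2 ^ 2) := by
  rw [kfun, radialKernel, Real.sq_sqrt (by positivity)]
  simp only [zero_sub, neg_sq]

@[fun_prop]
theorem measurable_radialKernel (c : ℝ) : Measurable (radialKernel c) :=
  Measurable.ite measurableSet_Iio measurable_const (by fun_prop)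

theorem radialKernel_zero {ρ : ℝ} (hρ : 0 ≤ ρ) : radialKernel 0 ρ = ρ⁻¹ := by
  simp [radialKernel, not_lt.2 hρ, Real.sqrt_sq hρ]

/-- At `ρ = |c|` this is the junk value `1 / √0 = 0`. -/
theorem radialKernel_of_le {c ρ : ℝ} (hρ : ρ ≤ |c|) : radialKernel c ρ = 0 := by
  rcases hρ.lt_or_eq with hlt | rfl
  · simp [radialKernel, hlt]
  · simp [radialKernel]

theorem radialKernel_of_lt {c ρ : ℝ} (hρ : |c| < ρ) :
    radialKernel c ρ = 1 / √(ρ ^ 2 - c ^ 2) := by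
  simp [radialKernel, not_lt.2 hρ.le]

theorem sq_sub_sq_pos_of_abs_lt {c r : ℝ} (hr : |c| < r) : 0 < r ^ 2 - c ^ 2 := by
  rw [← sq_abs c]; nlinarith [abs_nonneg c]

theorem hasDerivAt_sqrt_sq_sub_sq_sub_self {c r : ℝ} (hr : |c| < r) :
    HasDerivAt (fun r => √(r ^ 2 - c ^ 2) - r) (r / √(r ^ 2 - c ^ 2) - 1) r := by
  have hpos := sq_sub_sq_pos_of_abs_lt hr
  refine ((((hasDerivAt_pow 2 r).sub_const (c ^ 2)).sqrt hpos.ne').sub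
    (hasDerivAt_id r)).congr_deriv ?_
  have : √(r ^ 2 - c ^ 2) ≠ 0 := (Real.sqrt_pos.2 hpos).ne'
  field_simp
  ring

theorem monotoneOn_sqrt_sq_sub_sq_sub_self (c : ℝ) :
    MonotoneOn (fun r => √(r ^ 2 - c ^ 2) - r) (Ici |c|) := by
  refine monotoneOn_of_deriv_nonneg (convex_Ici _) (by fun_prop) ?_ ?_ <;> rw [interior_Ici]
  · exact fun r hr =>
      (hasDerivAt_sqrt_sq_sub_sq_sub_self hr).differentiableAt.differentiableWithinAt
  · intro r (hr : |c| < r)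
    rw [(hasDerivAt_sqrt_sq_sub_sq_sub_self hr).deriv, sub_nonneg,
      le_div_iff₀ (Real.sqrt_pos.2 (sq_sub_sq_pos_of_abs_lt hr)), one_mul, Real.sqrt_le_iff]
    exact ⟨(abs_nonneg c).trans hr.le, by nlinarith [sq_nonneg c]⟩

theorem mul_abs_radialKernel_sub_of_le {c r : ℝ} (hr : 0 < r) (hrc : r ≤ |c|) :
    r * |radialKernel 0 r - radialKernel c r| = 1 := by
  rw [radialKernel_zero hr.le, radialKernel_of_le hrc, sub_zero, abs_of_pos (inv_pos.2 hr),
    mul_inv_cancel₀ hr.ne']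

theorem mul_abs_radialKernel_sub_of_lt {c r : ℝ} (hrc : |c| < r) :
    r * |radialKernel 0 r - radialKernel c r| = r / √(r ^ 2 - c ^ 2) - 1 := by
  have hr : 0 < r := (abs_nonneg c).trans_lt hrc
  have hs : 0 < √(r ^ 2 - c ^ 2) := Real.sqrt_pos.2 (sq_sub_sq_pos_of_abs_lt hrc)
  have hsr : √(r ^ 2 - c ^ 2) ≤ r := Real.sqrt_le_iff.2 ⟨hr.le, by nlinarith [sq_nonneg c]⟩
  rw [radialKernel_zero hr.le, radialKernel_of_lt hrc, abs_sub_comm,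
    abs_of_nonneg (sub_nonneg.2 (by rw [one_div]; exact inv_anti₀ hs hsr))]
  field_simp

theorem lintegral_Ioi_mul_abs_radialKernel_sub_le (c : ℝ) :
    ∫⁻ r in Ioi 0, ENNReal.ofReal r * ENNReal.ofReal |radialKernel 0 r - radialKernel c r| ≤
      ENNReal.ofReal (2 * |c|) := by
  have near : ∫⁻ r in Ioc 0 |c|,
      ENNReal.ofReal r * ENNReal.ofReal |radialKernel 0 r - radialKernel c r| =
        ENNReal.ofReal |c| := by
    rw [setLIntegral_congr_fun measurableSet_Ioc (g := fun _ => 1) fun r hr => by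
        rw [← ENNReal.ofReal_mul hr.1.le, mul_abs_radialKernel_sub_of_le hr.1 hr.2,
          ENNReal.ofReal_one],
      setLIntegral_one, Real.volume_Ioc, sub_zero]
  have far : ∫⁻ r in Ioi |c|,
      ENNReal.ofReal r * ENNReal.ofReal |radialKernel 0 r - radialKernel c r| ≤
        ENNReal.ofReal |c| := by
    set f : ℝ → ℝ := fun r => √(r ^ 2 - c ^ 2) - r
    have hf_mono := monotoneOn_sqrt_sq_sub_sq_sub_self c
    have hf_image : f '' Ioi |c| ⊆ Icc (-|c|) 0 := by
      rintro _ ⟨r, hr, rfl⟩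
      have hr : |c| < r := hr
      refine ⟨?_, ?_⟩
      · simpa [f, sq_abs] using hf_mono self_mem_Ici hr.le hr.le
      · simp only [f, sub_nonpos]
        exact Real.sqrt_le_iff.2 ⟨(abs_nonneg c).trans hr.le, by nlinarith [sq_nonneg c]⟩
    calc ∫⁻ r in Ioi |c|, ENNReal.ofReal r * ENNReal.ofReal |radialKernel 0 r - radialKernel c r|
        = ∫⁻ r in Ioi |c|, ENNReal.ofReal (r / √(r ^ 2 - c ^ 2) - 1) :=
          setLIntegral_congr_fun measurableSet_Ioi fun r (hr : |c| < r) => by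
            rw [← ENNReal.ofReal_mul ((abs_nonneg c).trans hr.le),
              mul_abs_radialKernel_sub_of_lt hr]
      _ = volume (f '' Ioi |c|) :=
          lintegral_deriv_eq_volume_image_of_monotoneOn measurableSet_Ioi
            (fun r hr => (hasDerivAt_sqrt_sq_sub_sq_sub_self hr).hasDerivWithinAt)
            (hf_mono.mono Ioi_subset_Ici_self)
      _ ≤ volume (Icc (-|c|) 0) := measure_mono hf_image
      _ = ENNReal.ofReal |c| := by rw [Real.volume_Icc, sub_neg_eq_add, zero_add]
  rw [← Ioc_union_Ioi_eq_Ioi (abs_nonneg c),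
    lintegral_union measurableSet_Ioi (Ioc_disjoint_Ioi le_rfl), near, two_mul,
    ENNReal.ofReal_add (abs_nonneg c) (abs_nonneg c)]
  gcongr

theorem lintegral_abs_kfun_zero_sub_kfun_le (h : ℝ) :
    ∫⁻ y : ℝ × ℝ, ENNReal.ofReal |kfun 0 (0, 0) y - kfun h (0, 0) y| ≤
      ENNReal.ofReal (4 * π * |h|) := by
  simp only [kfun_zero_left]
  calc _ = ENNReal.ofReal (2 * π) * ∫⁻ r in Ioi 0,
        ENNReal.ofReal r * ENNReal.ofReal |radialKernel 0 r - radialKernel h r| :=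
        lintegral_comp_sqrt_sq_add_sq (by fun_prop)
    _ ≤ ENNReal.ofReal (2 * π) * ENNReal.ofReal (2 * |h|) := by
        gcongr; exact lintegral_Ioi_mul_abs_radialKernel_sub_le h
    _ = ENNReal.ofReal (4 * π * |h|) := by
        rw [← ENNReal.ofReal_mul (by positivity)]; ring_nf

/-- For every `h ∈ ℝ`,
`∫_{|y| ≤ 2} |k_0(0,y) − k_h(0,y)| dy ≤ 4π|h|`. -/
theorem kernel_difference_estimate (h : ℝ) :
    (∫ y in {y : ℝ × ℝ | y.1 ^ 2 + y.2 ^ 2 ≤ 4},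
        |kfun 0 ((0 : ℝ), (0 : ℝ)) y - kfun h ((0 : ℝ), (0 : ℝ)) y|) ≤ 4 * π * |h| := by
  refine (Real.le_norm_self _).trans ((norm_integral_le_lintegral_norm _).trans ?_)
  refine ENNReal.toReal_le_of_le_ofReal (by positivity) ?_
  simp only [Real.norm_eq_abs, abs_abs]
  exact (setLIntegral_le_lintegral _ _).trans (lintegral_abs_kfun_zero_sub_kfun_le h)

end
end

section
/- There exists a constant C > 0 (independent of f, δ_s and the grid) such that for every f ∈ L²(Ω), ‖R_{δ_s} f − R f‖_{L²(Ω')} ≤ C · sup_{|h| < (3/2)δ_s} ω_{R f}(h, 0). (The proof yields C = √3.) -/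
open MeasureTheory Real Set Filter

noncomputable section

/-! On a detector cell `S_p` the hat profile has mass `∫ w_{δ_s}(t - s_p) dt = δ_s²`, so
`R_{δ_s} f - R f` at `(s, φ)` is the `δ_s⁻² w_{δ_s}(· - s_p)`-mean of `Rf(t, φ) - Rf(s, φ)`.
Jensen bounds its square by `δ_s⁻² ∫ w_{δ_s}(t - s_p) |Rf(t, φ) - Rf(s, φ)|² dt`, and since
`w_{δ_s} ≤ δ_s` vanishes unless `|t - s| < 3δ_s/2`, this is at most
`δ_s⁻¹ ∫_{|h| < 3δ_s/2} |Rf(s + h, φ) - Rf(s, φ)|² dh`. Integrating in `s` and `φ` and exchanging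
the integrals gives `‖R_{δ_s} f - R f‖² ≤ δ_s⁻¹ ∫_{|h| < 3δ_s/2} ω_{Rf}(h, 0)² dh ≤ 3 sup ω²`.

The estimates are carried out with lower Lebesgue integrals, where Tonelli needs no
integrability; `Rf ∈ L²(ℝ × S¹)` makes the supremum finite and lets us return to the Bochner
integrals of the statement. -/

open scoped ENNReal

theorem ENNReal.ofReal_sq_eq_ofReal_abs_sq (a : ℝ) :
    ENNReal.ofReal (a ^ 2) = ENNReal.ofReal |a| ^ 2 := by
  rw [← sq_abs, ENNReal.ofReal_pow (abs_nonneg a)]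

theorem ENNReal.ofReal_sq_sub_le (a b : ℝ) :
    ENNReal.ofReal ((a - b) ^ 2) ≤ 2 * ENNReal.ofReal (a ^ 2) + 2 * ENNReal.ofReal (b ^ 2) := by
  rw [← ENNReal.ofReal_ofNat 2, ← ENNReal.ofReal_mul zero_le_two, ← ENNReal.ofReal_mul zero_le_two,
    ← ENNReal.ofReal_add (by positivity) (by positivity)]
  exact ENNReal.ofReal_le_ofReal (by nlinarith [sq_nonneg (a + b)])

section Integrals

variable {α β : Type*} [MeasurableSpace α] [MeasurableSpace β] {μ : Measure α} {ν : Measure β}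

theorem lintegral_mul_sq_le_lintegral_mul_lintegral {u v : α → ℝ≥0∞} (hu : AEMeasurable u μ)
    (hv : AEMeasurable v μ) :
    (∫⁻ a, u a * v a ∂μ) ^ 2 ≤ (∫⁻ a, u a ∂μ) * ∫⁻ a, u a * v a ^ 2 ∂μ := by
  have hsqrt : ∀ x : ℝ≥0∞, (x ^ (1 / 2 : ℝ)) ^ 2 = x := fun x => by
    rw [← ENNReal.rpow_natCast, ← ENNReal.rpow_mul]; norm_num
  have hprod : ∀ a, u a ^ (1 / 2 : ℝ) * (u a * v a ^ 2) ^ (1 / 2 : ℝ) = u a * v a := fun a => by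
    rw [ENNReal.mul_rpow_of_nonneg _ _ (by norm_num), ← mul_assoc,
      ← ENNReal.rpow_add_of_nonneg _ _ (by norm_num) (by norm_num), ← ENNReal.rpow_natCast,
      ← ENNReal.rpow_mul]
    norm_num
  have hholder := ENNReal.lintegral_mul_norm_pow_le (g := fun a => u a * v a ^ 2) hu
    (hu.mul (hv.pow_const 2)) (p := 1 / 2) (q := 1 / 2) (by norm_num) (by norm_num) (by norm_num)
  rw [lintegral_congr hprod] at hholder
  calc (∫⁻ a, u a * v a ∂μ) ^ 2
      ≤ ((∫⁻ a, u a ∂μ) ^ (1 / 2 : ℝ) * (∫⁻ a, u a * v a ^ 2 ∂μ) ^ (1 / 2 : ℝ)) ^ 2 :=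
        pow_le_pow_left' hholder 2
    _ = _ := by rw [mul_pow, hsqrt, hsqrt]

theorem lintegral_sq_le_measure_univ_mul {v : α → ℝ≥0∞} (hv : AEMeasurable v μ) :
    (∫⁻ a, v a ∂μ) ^ 2 ≤ μ univ * ∫⁻ a, v a ^ 2 ∂μ := by
  simpa using lintegral_mul_sq_le_lintegral_mul_lintegral (u := fun _ => 1) aemeasurable_const hv

theorem memLp_two_of_lintegral_sq_lt_top {G : α → ℝ} (hG : AEStronglyMeasurable G μ)
    (hfin : ∫⁻ a, ENNReal.ofReal (G a ^ 2) ∂μ < ⊤) : MemLp G 2 μ :=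
  (memLp_two_iff_integrable_sq hG).2
    ⟨hG.pow 2, (hasFiniteIntegral_iff_ofReal (ae_of_all _ fun _ => sq_nonneg _)).2 hfin⟩

theorem integral_le_toReal_lintegral {f : α → ℝ} (hf : ∀ a, 0 ≤ f a) :
    ∫ a, f a ∂μ ≤ (∫⁻ a, ENNReal.ofReal (f a) ∂μ).toReal := by
  by_cases h : Integrable f μ
  · rw [integral_eq_lintegral_of_nonneg_ae (ae_of_all _ hf) h.1]
  · rw [integral_undef h]; exact ENNReal.toReal_nonneg

theorem integral_integral_le_toReal_lintegral_lintegral {F : α → β → ℝ}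
    (hF : ∀ a b, 0 ≤ F a b) (hfin : ∫⁻ a, ∫⁻ b, ENNReal.ofReal (F a b) ∂ν ∂μ ≠ ⊤) :
    ∫ a, ∫ b, F a b ∂ν ∂μ ≤ (∫⁻ a, ∫⁻ b, ENNReal.ofReal (F a b) ∂ν ∂μ).toReal := by
  refine (integral_le_toReal_lintegral fun a => integral_nonneg (hF a)).trans
    (ENNReal.toReal_mono hfin (lintegral_mono fun a => ?_))
  exact (ENNReal.ofReal_le_ofReal (integral_le_toReal_lintegral (hF a))).trans
    ENNReal.ofReal_toReal_le

theorem integral_integral_eq_toReal_lintegral_lintegral [SFinite ν] {F : α → β → ℝ}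
    (hF : ∀ a b, 0 ≤ F a b) (hFm : Measurable (Function.uncurry F))
    (hfin : ∫⁻ a, ∫⁻ b, ENNReal.ofReal (F a b) ∂ν ∂μ ≠ ⊤) :
    ∫ a, ∫ b, F a b ∂ν ∂μ = (∫⁻ a, ∫⁻ b, ENNReal.ofReal (F a b) ∂ν ∂μ).toReal := by
  have hinner : Measurable fun a => ∫⁻ b, ENNReal.ofReal (F a b) ∂ν :=
    hFm.ennreal_ofReal.lintegral_prod_right'
  rw [← integral_toReal hinner.aemeasurable (ae_lt_top hinner hfin)]
  refine integral_congr_ae (ae_of_all _ fun a => ?_)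
  exact integral_eq_lintegral_of_nonneg_ae (ae_of_all _ (hF a))
    (hFm.comp measurable_prodMk_left).aestronglyMeasurable

end Integrals

section HatFunction

variable {δ : ℝ}

theorem hatw_nonneg (δ t : ℝ) : 0 ≤ hatw δ t := le_max_left _ _

theorem hatw_le (hδ : 0 ≤ δ) (t : ℝ) : hatw δ t ≤ δ :=
  max_le hδ (sub_le_self _ (abs_nonneg t))

theorem hatw_eq_zero_of_le_abs {t : ℝ} (h : δ ≤ |t|) : hatw δ t = 0 :=
  max_eq_left (sub_nonpos.2 h)

theorem continuous_hatw (δ : ℝ) : Continuous (hatw δ) :=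
  continuous_const.max (continuous_const.sub continuous_abs)

theorem hasCompactSupport_hatw (δ : ℝ) : HasCompactSupport (hatw δ) :=
  HasCompactSupport.intro (isCompact_Icc (a := -δ) (b := δ)) fun _ ht =>
    hatw_eq_zero_of_le_abs (not_lt.1 fun h => ht (abs_le.1 h.le))

theorem integrable_hatw (δ : ℝ) : Integrable (hatw δ) :=
  (continuous_hatw δ).integrable_of_hasCompactSupport (hasCompactSupport_hatw δ)

theorem integral_hatw (hδ : 0 ≤ δ) : ∫ t, hatw δ t = δ ^ 2 := by
  have hpos : ∫ x in Ioi (0 : ℝ), max 0 (δ - x) = ∫ x in (0 : ℝ)..δ, (δ - x) := by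
    rw [intervalIntegral.integral_of_le hδ, setIntegral_eq_of_subset_of_forall_sdiff_eq_zero
      measurableSet_Ioi Ioc_subset_Ioi_self fun x hx => max_eq_left ?_]
    · exact setIntegral_congr_fun measurableSet_Ioc fun x hx => max_eq_right (by linarith [hx.2])
    · have : δ < x := not_le.1 fun h => hx.2 ⟨hx.1, h⟩
      linarith
  rw [show hatw δ = fun t => max 0 (δ - |t|) from rfl,
    integral_comp_abs (f := fun x => max 0 (δ - x)), hpos,
    intervalIntegral.integral_sub intervalIntegrable_const intervalIntegral.intervalIntegrable_id]
  simp
  ring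

theorem integral_hatw_sub (hδ : 0 ≤ δ) (c : ℝ) : ∫ t, hatw δ (t - c) = δ ^ 2 := by
  rw [integral_sub_right_eq_self (hatw δ) c, integral_hatw hδ]

theorem lintegral_hatw_sub (hδ : 0 ≤ δ) (c : ℝ) :
    ∫⁻ t, ENNReal.ofReal (hatw δ (t - c)) = ENNReal.ofReal (δ ^ 2) := by
  rw [← integral_hatw_sub hδ c, ofReal_integral_eq_lintegral_ofReal
    ((integrable_hatw δ).comp_sub_right c) (ae_of_all _ fun t => hatw_nonneg δ _)]

theorem integrable_hatw_sub_mul {G : ℝ → ℝ} (hG : MemLp G 2) (δ c : ℝ) :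
    Integrable fun t => hatw δ (t - c) * G t :=
  (((continuous_hatw δ).memLp_of_hasCompactSupport (p := 2)
    (hasCompactSupport_hatw δ)).comp_measurePreserving
    (measurePreserving_sub_right volume c)).integrable_mul hG

end HatFunction

section Detector

variable {δs : ℝ} {P : ℕ}

theorem sCen_add_le_sCen (hδ : 0 ≤ δs) {p q : ℕ} (h : p < q) :
    sCen δs P p + δs ≤ sCen δs P q := by
  have : (p : ℝ) + 1 ≤ q := by exact_mod_cast h
  simp only [sCen]
  nlinarith

theorem sCell_disjoint (hδ : 0 ≤ δs) {p q : ℕ} (hpq : p ≠ q) :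
    Disjoint (sCell δs P p) (sCell δs P q) := by
  wlog h : p < q generalizing p q
  · exact (this hpq.symm (lt_of_le_of_ne (not_lt.1 h) hpq.symm)).symm
  refine Set.disjoint_left.2 fun s hp hq => ?_
  have := sCen_add_le_sCen (P := P) hδ h
  simp only [sCell, mem_Ico] at hp hq
  linarith

theorem abs_sub_sCen_le {p : ℕ} {s : ℝ} (hs : s ∈ sCell δs P p) : |s - sCen δs P p| ≤ δs / 2 :=
  abs_le.2 ⟨by linarith [hs.1], by linarith [hs.2]⟩

/-- `R_{δ_s}` on a single projection: `RadonS δs P f s φ = detectorAverage δs P (Radon f · φ) s`. -/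
def detectorAverage (δs : ℝ) (P : ℕ) (G : ℝ → ℝ) (s : ℝ) : ℝ :=
  (δs ^ 2)⁻¹ * ∑ p ∈ Finset.Icc 1 P,
    Set.indicator (sCell δs P p) (fun _ => (1 : ℝ)) s * ∫ t : ℝ, hatw δs (t - sCen δs P p) * G t

theorem detectorAverage_of_mem_sCell (hδ : 0 ≤ δs) (G : ℝ → ℝ) {p : ℕ} (hp : p ∈ Finset.Icc 1 P)
    {s : ℝ} (hs : s ∈ sCell δs P p) :
    detectorAverage δs P G s = (δs ^ 2)⁻¹ * ∫ t, hatw δs (t - sCen δs P p) * G t := by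
  rw [detectorAverage, Finset.sum_eq_single_of_mem p hp, indicator_of_mem hs, one_mul]
  intro q _ hqp
  rw [indicator_of_notMem (Set.disjoint_right.1 (sCell_disjoint hδ hqp) hs), zero_mul]

theorem detectorAverage_congr_ae {G₁ G₂ : ℝ → ℝ} (h : G₁ =ᵐ[volume] G₂) :
    detectorAverage δs P G₁ = detectorAverage δs P G₂ := by
  funext s
  simp only [detectorAverage]
  congr 1
  refine Finset.sum_congr rfl fun p _ => congrArg _ (integral_congr_ae ?_)
  filter_upwards [h] with t ht
  rw [ht]

end Detector

section DetectorError

variable {δ : ℝ} {G : ℝ → ℝ}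

/-- Jensen's inequality for the probability density `δ⁻² w_δ(· - c)`. -/
theorem ofReal_sq_hatAverage_sub_le (hδ : 0 < δ) (hG : MemLp G 2) (c s : ℝ) :
    ENNReal.ofReal ((((δ ^ 2)⁻¹ * ∫ t, hatw δ (t - c) * G t) - G s) ^ 2) ≤
      (ENNReal.ofReal (δ ^ 2))⁻¹ *
        ∫⁻ t, ENNReal.ofReal (hatw δ (t - c)) * ENNReal.ofReal ((G t - G s) ^ 2) := by
  set a := ENNReal.ofReal (δ ^ 2)
  have ha0 : a ≠ 0 := by positivity
  have hatop : a ≠ ⊤ := ENNReal.ofReal_ne_top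
  have hδ2 : 0 < δ ^ 2 := by positivity
  have hcentered : ((δ ^ 2)⁻¹ * ∫ t, hatw δ (t - c) * G t) - G s =
      (δ ^ 2)⁻¹ * ∫ t, hatw δ (t - c) * (G t - G s) := by
    simp_rw [mul_sub]
    rw [integral_sub (integrable_hatw_sub_mul hG δ c)
      (((integrable_hatw δ).comp_sub_right c).mul_const _), integral_mul_const,
      integral_hatw_sub hδ.le]
    field_simp
  have hcs := lintegral_mul_sq_le_lintegral_mul_lintegral (μ := volume)
    (u := fun t => ENNReal.ofReal (hatw δ (t - c))) (v := fun t => ‖G t - G s‖ₑ)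
    ((continuous_hatw δ).comp (continuous_sub_right c)).measurable.ennreal_ofReal.aemeasurable
    (hG.1.aemeasurable.sub aemeasurable_const).enorm
  rw [lintegral_hatw_sub hδ.le] at hcs
  have hnorm : ‖∫ t, hatw δ (t - c) * (G t - G s)‖ₑ ≤
      ∫⁻ t, ENNReal.ofReal (hatw δ (t - c)) * ‖G t - G s‖ₑ := by
    refine (enorm_integral_le_lintegral_enorm _).trans_eq (lintegral_congr fun t => ?_)
    rw [enorm_mul, Real.enorm_of_nonneg (hatw_nonneg δ _)]
  calc ENNReal.ofReal ((((δ ^ 2)⁻¹ * ∫ t, hatw δ (t - c) * G t) - G s) ^ 2)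
      = a⁻¹ ^ 2 * ‖∫ t, hatw δ (t - c) * (G t - G s)‖ₑ ^ 2 := by
        rw [hcentered, ENNReal.ofReal_sq_eq_ofReal_abs_sq, ← enorm_eq_ofReal_abs, enorm_mul,
          mul_pow, Real.enorm_of_nonneg (by positivity), ENNReal.ofReal_inv_of_pos hδ2]
    _ ≤ a⁻¹ ^ 2 * (a * ∫⁻ t, ENNReal.ofReal (hatw δ (t - c)) * ‖G t - G s‖ₑ ^ 2) := by
        gcongr
        exact (pow_le_pow_left' hnorm 2).trans hcs
    _ = a⁻¹ * ∫⁻ t, ENNReal.ofReal (hatw δ (t - c)) * ENNReal.ofReal ((G t - G s) ^ 2) := by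
        rw [pow_two, mul_assoc, ← mul_assoc a⁻¹ a, ENNReal.inv_mul_cancel ha0 hatop, one_mul]
        simp_rw [ENNReal.ofReal_sq_eq_ofReal_abs_sq, ← enorm_eq_ofReal_abs]

/-- The weight `w_δ(s + h - c)` vanishes unless `|h| < 3δ/2`, since `|s - c| ≤ δ/2`. -/
theorem lintegral_hatw_sub_mul_le (hδ : 0 ≤ δ) {c s : ℝ} (hsc : |s - c| ≤ δ / 2)
    (D : ℝ → ℝ≥0∞) :
    ∫⁻ t, ENNReal.ofReal (hatw δ (t - c)) * D t ≤
      ENNReal.ofReal δ * ∫⁻ h in Ioo (-(3 / 2 * δ)) (3 / 2 * δ), D (s + h) := by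
  rw [← lintegral_add_left_eq_self _ s, ← lintegral_indicator measurableSet_Ioo,
    ← lintegral_const_mul' _ _ ENNReal.ofReal_ne_top]
  refine lintegral_mono fun h => ?_
  by_cases hh : h ∈ Ioo (-(3 / 2 * δ)) (3 / 2 * δ)
  · rw [indicator_of_mem hh]
    exact mul_le_mul_left (ENNReal.ofReal_le_ofReal (hatw_le hδ _)) _
  · have hfar : 3 / 2 * δ ≤ |h| := by
      by_contra! hlt
      exact hh (abs_lt.1 hlt)
    have : δ ≤ |s + h - c| := by
      have := abs_sub_abs_le_abs_sub h (c - s)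
      rw [abs_sub_comm c s] at this
      calc δ ≤ |h| - |s - c| := by linarith
        _ ≤ |h - (c - s)| := this
        _ = |s + h - c| := by ring_nf
    rw [indicator_of_notMem hh, hatw_eq_zero_of_le_abs this, ENNReal.ofReal_zero, zero_mul,
      mul_zero]

theorem ofReal_sq_detectorAverage_sub_le (hδ : 0 < δ) (hG : MemLp G 2) {P p : ℕ}
    (hp : p ∈ Finset.Icc 1 P) {s : ℝ} (hs : s ∈ sCell δ P p) :
    ENNReal.ofReal ((detectorAverage δ P G s - G s) ^ 2) ≤
      (ENNReal.ofReal δ)⁻¹ *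
        ∫⁻ h in Ioo (-(3 / 2 * δ)) (3 / 2 * δ), ENNReal.ofReal ((G (s + h) - G s) ^ 2) := by
  have hδ0 : ENNReal.ofReal δ ≠ 0 := by positivity
  rw [detectorAverage_of_mem_sCell hδ.le G hp hs]
  refine (ofReal_sq_hatAverage_sub_le hδ hG _ s).trans ?_
  calc _ ≤ (ENNReal.ofReal (δ ^ 2))⁻¹ * (ENNReal.ofReal δ *
        ∫⁻ h in Ioo (-(3 / 2 * δ)) (3 / 2 * δ), ENNReal.ofReal ((G (s + h) - G s) ^ 2)) := by
        gcongr
        exact lintegral_hatw_sub_mul_le hδ.le (abs_sub_sCen_le hs) _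
    _ = _ := by
        rw [sq, ENNReal.ofReal_mul hδ.le,
          ENNReal.mul_inv (Or.inl hδ0) (Or.inl ENNReal.ofReal_ne_top), mul_assoc,
          ENNReal.inv_mul_cancel_left hδ0 ENNReal.ofReal_ne_top]

theorem measurable_sq_sub_comp_add (hGm : Measurable G) :
    Measurable fun z : ℝ × ℝ => ENNReal.ofReal ((G (z.1 + z.2) - G z.1) ^ 2) :=
  (((hGm.comp (measurable_fst.add measurable_snd)).sub (hGm.comp measurable_fst)).pow_const
    2).ennreal_ofReal

theorem setLIntegral_sq_detectorAverage_sub_le (hδ : 0 < δ) {P : ℕ} (hcov : CoversI δ P)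
    (hGm : Measurable G) (hG : MemLp G 2) :
    ∫⁻ s in Ioo (-1 : ℝ) 1, ENNReal.ofReal ((detectorAverage δ P G s - G s) ^ 2) ≤
      (ENNReal.ofReal δ)⁻¹ * ∫⁻ h in Ioo (-(3 / 2 * δ)) (3 / 2 * δ),
        ∫⁻ s, ENNReal.ofReal ((G (s + h) - G s) ^ 2) := by
  calc _ ≤ ∫⁻ s in Ioo (-1 : ℝ) 1, (ENNReal.ofReal δ)⁻¹ *
        ∫⁻ h in Ioo (-(3 / 2 * δ)) (3 / 2 * δ), ENNReal.ofReal ((G (s + h) - G s) ^ 2) := by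
        refine setLIntegral_mono' measurableSet_Ioo fun s hs => ?_
        obtain ⟨p, hp, hsp⟩ := mem_iUnion₂.1 (hcov hs)
        exact ofReal_sq_detectorAverage_sub_le hδ hG hp hsp
    _ ≤ ∫⁻ s, (ENNReal.ofReal δ)⁻¹ *
        ∫⁻ h in Ioo (-(3 / 2 * δ)) (3 / 2 * δ), ENNReal.ofReal ((G (s + h) - G s) ^ 2) :=
        setLIntegral_le_lintegral _ _
    _ = _ := by
        rw [lintegral_const_mul' _ _ (ENNReal.inv_ne_top.2 (by positivity)),
          lintegral_lintegral_swap (measurable_sq_sub_comp_add hGm).aemeasurable]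

theorem lintegral_sq_sub_comp_add_le (hGm : Measurable G) (h : ℝ) :
    ∫⁻ s, ENNReal.ofReal ((G (s + h) - G s) ^ 2) ≤ 4 * ∫⁻ s, ENNReal.ofReal (G s ^ 2) := by
  calc _ ≤ ∫⁻ s, (2 * ENNReal.ofReal (G (s + h) ^ 2) + 2 * ENNReal.ofReal (G s ^ 2)) :=
        lintegral_mono fun s => ENNReal.ofReal_sq_sub_le _ _
    _ = 2 * (∫⁻ s, ENNReal.ofReal (G (s + h) ^ 2)) + 2 * ∫⁻ s, ENNReal.ofReal (G s ^ 2) := by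
        rw [lintegral_add_right _ ((hGm.pow_const 2).ennreal_ofReal.const_mul 2),
          lintegral_const_mul' _ _ ENNReal.ofNat_ne_top,
          lintegral_const_mul' _ _ ENNReal.ofNat_ne_top]
    _ = _ := by
        rw [lintegral_add_right_eq_self (fun s => ENNReal.ofReal (G s ^ 2)) h]
        ring

end DetectorError

section Sinogram

/-- `nSino g ^ 2` as a lower Lebesgue integral, meaningful (possibly `∞`) for every `g`. -/
def sinoEnergy (g : ℝ → ℝ → ℝ) : ℝ≥0∞ := ∫⁻ φ in Ioc (-π) π, ∫⁻ s, ENNReal.ofReal (g s φ ^ 2)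

def modContSq (g : ℝ → ℝ → ℝ) (h : ℝ) : ℝ≥0∞ := sinoEnergy fun s φ => g (s + h) φ - g s φ

variable {g : ℝ → ℝ → ℝ}

theorem modCont_zero_zero (g : ℝ → ℝ → ℝ) : modCont g 0 0 = 0 := by
  simp [modCont]

theorem modContSq_le (hg : Measurable (Function.uncurry g)) (h : ℝ) :
    modContSq g h ≤ 4 * sinoEnergy g :=
  (lintegral_mono fun _ => lintegral_sq_sub_comp_add_le (hg.comp measurable_prodMk_right) h
    ).trans_eq (lintegral_const_mul' _ _ ENNReal.ofNat_ne_top)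

theorem modContSq_ne_top (hg : Measurable (Function.uncurry g)) (hfin : sinoEnergy g ≠ ⊤)
    (h : ℝ) : modContSq g h ≠ ⊤ :=
  ((modContSq_le hg h).trans_lt (ENNReal.mul_lt_top ENNReal.ofNat_lt_top hfin.lt_top)).ne

theorem modCont_eq_sqrt_modContSq (hg : Measurable (Function.uncurry g))
    (hfin : sinoEnergy g ≠ ⊤) (h : ℝ) : modCont g h 0 = √(modContSq g h).toReal := by
  have hm : Measurable fun z : ℝ × ℝ => (g (z.2 + h) z.1 - g z.2 z.1) ^ 2 :=
    ((hg.comp ((measurable_snd.add_const h).prodMk measurable_fst)).sub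
      (hg.comp (measurable_snd.prodMk measurable_fst))).pow_const 2
  simp only [modCont, add_zero]
  rw [integral_integral_eq_toReal_lintegral_lintegral (fun _ _ => sq_nonneg _) hm
    (modContSq_ne_top hg hfin h), Real.sqrt_eq_rpow]
  rfl

theorem bddAbove_range_modCont (hg : Measurable (Function.uncurry g)) (hfin : sinoEnergy g ≠ ⊤) :
    BddAbove (range fun h => modCont g h 0) := by
  refine ⟨√(4 * sinoEnergy g).toReal, ?_⟩
  rintro _ ⟨h, rfl⟩
  simp only [modCont_eq_sqrt_modContSq hg hfin h]
  exact Real.sqrt_le_sqrt (ENNReal.toReal_mono (ENNReal.mul_ne_top ENNReal.ofNat_ne_top hfin)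
    (modContSq_le hg h))

theorem supMod_nonneg (hg : Measurable (Function.uncurry g)) (hfin : sinoEnergy g ≠ ⊤) {r : ℝ}
    (hr : 0 < r) : 0 ≤ supMod g r :=
  modCont_zero_zero g ▸ le_csSup ((bddAbove_range_modCont hg hfin).mono (image_subset_range _ _))
    ⟨0, ⟨neg_lt_zero.2 hr, hr⟩, rfl⟩

theorem modContSq_le_supMod (hg : Measurable (Function.uncurry g)) (hfin : sinoEnergy g ≠ ⊤)
    {r h : ℝ} (hh : h ∈ Ioo (-r) r) : modContSq g h ≤ ENNReal.ofReal (supMod g r ^ 2) := by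
  have hle : modCont g h 0 ≤ supMod g r :=
    le_csSup ((bddAbove_range_modCont hg hfin).mono (image_subset_range _ _)) ⟨h, hh, rfl⟩
  rw [modCont_eq_sqrt_modContSq hg hfin, Real.sqrt_le_iff] at hle
  rw [← ENNReal.ofReal_toReal (modContSq_ne_top hg hfin h)]
  exact ENNReal.ofReal_le_ofReal hle.2

variable {δs : ℝ} {P : ℕ}

theorem lintegral_sq_detectorAverage_sub_le (hg : Measurable (Function.uncurry g))
    (hfin : sinoEnergy g ≠ ⊤) (hδ : 0 < δs) (hcov : CoversI δs P) :
    ∫⁻ φ in Ioc (-π) π, ∫⁻ s in Ioo (-1 : ℝ) 1,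
        ENNReal.ofReal ((detectorAverage δs P (fun t => g t φ) s - g s φ) ^ 2) ≤
      ENNReal.ofReal (3 * supMod g (3 / 2 * δs) ^ 2) := by
  set J := Ioo (-(3 / 2 * δs)) (3 / 2 * δs)
  have hsec : ∀ᵐ φ ∂volume.restrict (Ioc (-π) π), MemLp (fun s => g s φ) 2 := by
    filter_upwards [ae_lt_top (hg.pow_const 2).ennreal_ofReal.lintegral_prod_left' hfin]
      with φ hφ
    exact memLp_two_of_lintegral_sq_lt_top (hg.comp measurable_prodMk_right).aestronglyMeasurable
      hφ
  have hm : Measurable fun z : (ℝ × ℝ) × ℝ =>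
      ENNReal.ofReal ((g (z.2 + z.1.2) z.1.1 - g z.2 z.1.1) ^ 2) :=
    (((hg.comp ((measurable_snd.add measurable_fst.snd).prodMk measurable_fst.fst)).sub
      (hg.comp (measurable_snd.prodMk measurable_fst.fst))).pow_const 2).ennreal_ofReal
  have hδ0 : ENNReal.ofReal δs ≠ 0 := by positivity
  calc _ ≤ ∫⁻ φ in Ioc (-π) π, (ENNReal.ofReal δs)⁻¹ *
        ∫⁻ h in J, ∫⁻ s, ENNReal.ofReal ((g (s + h) φ - g s φ) ^ 2) :=
        lintegral_mono_ae (hsec.mono fun φ hφ => setLIntegral_sq_detectorAverage_sub_le hδ hcov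
          (hg.comp measurable_prodMk_right) hφ)
    _ = (ENNReal.ofReal δs)⁻¹ * ∫⁻ h in J, modContSq g h := by
        rw [lintegral_const_mul' _ _ (ENNReal.inv_ne_top.2 hδ0),
          lintegral_lintegral_swap hm.lintegral_prod_right'.aemeasurable]
        rfl
    _ ≤ (ENNReal.ofReal δs)⁻¹ * ∫⁻ _ in J, ENNReal.ofReal (supMod g (3 / 2 * δs) ^ 2) := by
        gcongr (ENNReal.ofReal δs)⁻¹ * ?_
        exact setLIntegral_mono' measurableSet_Ioo fun h hh => modContSq_le_supMod hg hfin hh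
    _ = _ := by
        rw [setLIntegral_const, Real.volume_Ioo, show 3 / 2 * δs - -(3 / 2 * δs) = δs * 3 by ring,
          ENNReal.ofReal_mul hδ.le, mul_left_comm,
          ENNReal.inv_mul_cancel_left hδ0 ENNReal.ofReal_ne_top,
          ← ENNReal.ofReal_mul (by positivity), mul_comm]

theorem nSinoD_detectorAverage_sub_le (hg : Measurable (Function.uncurry g))
    (hfin : sinoEnergy g ≠ ⊤) (hδ : 0 < δs) (hcov : CoversI δs P) :
    nSinoD (fun s φ => detectorAverage δs P (fun t => g t φ) s - g s φ) ≤
      √3 * supMod g (3 / 2 * δs) := by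
  have hS := supMod_nonneg hg hfin (by positivity : 0 < 3 / 2 * δs)
  have hL := lintegral_sq_detectorAverage_sub_le hg hfin hδ hcov
  rw [nSinoD, ← Real.sqrt_eq_rpow, ← Real.sqrt_sq hS, ← Real.sqrt_mul (by norm_num)]
  refine Real.sqrt_le_sqrt ?_
  calc _ ≤ _ := integral_integral_le_toReal_lintegral_lintegral (fun _ _ => sq_nonneg _)
        (ne_top_of_le_ne_top ENNReal.ofReal_ne_top hL)
    _ ≤ (ENNReal.ofReal (3 * supMod g (3 / 2 * δs) ^ 2)).toReal :=
        ENNReal.toReal_mono ENNReal.ofReal_ne_top hL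
    _ = _ := ENNReal.toReal_ofReal (by positivity)

end Sinogram

section RadonTransform

theorem continuous_dirv : Continuous dirv := continuous_cos.prodMk continuous_sin

theorem continuous_dirp : Continuous dirp := continuous_sin.neg.prodMk continuous_cos

theorem measurePreserving_rotation (φ : ℝ) :
    MeasurePreserving (fun z : ℝ × ℝ => z.1 • dirv φ + z.2 • dirp φ) volume volume := by
  set L : (ℝ × ℝ) →ₗ[ℝ] ℝ × ℝ := Matrix.toLin (Module.Basis.finTwoProd ℝ)
    (Module.Basis.finTwoProd ℝ) !![cos φ, -sin φ; sin φ, cos φ]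
  have hL : (fun z : ℝ × ℝ => z.1 • dirv φ + z.2 • dirp φ) = L := by
    funext z
    simp only [L, Matrix.toLin_finTwoProd_apply, dirv, dirp, Prod.ext_iff]
    simp only [Prod.fst_add, Prod.snd_add, Prod.smul_fst, Prod.smul_snd, smul_eq_mul]
    constructor <;> ring
  have hdet : LinearMap.det L = 1 := by
    rw [LinearMap.det_toLin, Matrix.det_fin_two_of]
    linear_combination sin_sq_add_cos_sq φ
  rw [hL]
  refine ⟨L.continuous_of_finiteDimensional.measurable, ?_⟩
  rw [Measure.map_linearMap_addHaar_eq_smul_addHaar volume (by simp [hdet]), hdet]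
  simp

theorem rotation_mem_unitDisk_iff (s t φ : ℝ) :
    s • dirv φ + t • dirp φ ∈ unitDisk ↔ s ^ 2 + t ^ 2 < 1 := by
  have : (s * cos φ + t * -sin φ) ^ 2 + (s * sin φ + t * cos φ) ^ 2 = s ^ 2 + t ^ 2 := by
    linear_combination (s ^ 2 + t ^ 2) * sin_sq_add_cos_sq φ
  show (s * cos φ + t * -sin φ) ^ 2 + (s * sin φ + t * cos φ) ^ 2 < 1 ↔ _
  rw [this]

variable {f : ℝ × ℝ → ℝ}

theorem measurable_uncurry_radon (hf : Measurable f) : Measurable (Function.uncurry (Radon f)) := by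
  have hline : Measurable fun z : (ℝ × ℝ) × ℝ => f (z.1.1 • dirv z.1.2 + z.2 • dirp z.1.2) :=
    hf.comp ((continuous_fst.fst.smul (continuous_dirv.comp continuous_fst.snd)).add
      (continuous_snd.smul (continuous_dirp.comp continuous_fst.snd))).measurable
  exact hline.stronglyMeasurable.integral_prod_right'.measurable

theorem radon_ae_eq_of_ae_eq {f₀ : ℝ × ℝ → ℝ} (h : f =ᵐ[volume] f₀) (φ : ℝ) :
    (fun s => Radon f s φ) =ᵐ[volume] fun s => Radon f₀ s φ := by
  have hrot := (measurePreserving_rotation φ).quasiMeasurePreserving.ae_eq_comp h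
  rw [Measure.volume_eq_prod] at hrot
  filter_upwards [Measure.ae_ae_of_ae_prod hrot] with s hs
  exact integral_congr_ae hs

/-- A line meets the unit disk in a chord of length at most `2`. -/
theorem ofReal_sq_radon_le (hf : Measurable f) (hsupp : SuppDisk f) (s φ : ℝ) :
    ENNReal.ofReal (Radon f s φ ^ 2) ≤
      2 * ∫⁻ t : ℝ, ENNReal.ofReal (f (s • dirv φ + t • dirp φ) ^ 2) := by
  set v : ℝ → ℝ≥0∞ := fun t : ℝ => ‖f (s • dirv φ + t • dirp φ)‖ₑ
  have hv : Measurable v := (hf.comp ((measurePreserving_rotation φ).measurable.comp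
    measurable_prodMk_left)).enorm
  have hchord : Function.support v ⊆ Icc (-1) 1 := fun t ht => by
    by_contra hout
    refine ht (enorm_eq_zero.2 (hsupp _ fun hin => hout (abs_le.1 ?_)))
    rw [rotation_mem_unitDisk_iff] at hin
    nlinarith [sq_abs t, abs_nonneg t]
  calc ENNReal.ofReal (Radon f s φ ^ 2) = ‖Radon f s φ‖ₑ ^ 2 := by
        rw [ENNReal.ofReal_sq_eq_ofReal_abs_sq, enorm_eq_ofReal_abs]
    _ ≤ (∫⁻ t in Icc (-1) 1, v t) ^ 2 := by
        rw [setLIntegral_eq_of_support_subset hchord]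
        exact pow_le_pow_left' (enorm_integral_le_lintegral_enorm _) 2
    _ ≤ 2 * ∫⁻ t in Icc (-1) 1, v t ^ 2 := by
        have := lintegral_sq_le_measure_univ_mul hv.aemeasurable (μ := volume.restrict (Icc (-1) 1))
        rwa [Measure.restrict_apply_univ, Real.volume_Icc, show (1 : ℝ) - -1 = 2 by norm_num,
          ENNReal.ofReal_ofNat] at this
    _ ≤ _ := by
        gcongr 2 * ?_
        refine (setLIntegral_le_lintegral _ _).trans_eq (lintegral_congr fun t => ?_)
        rw [ENNReal.ofReal_sq_eq_ofReal_abs_sq, ← enorm_eq_ofReal_abs]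

theorem lintegral_sq_radon_le (hf : Measurable f) (hsupp : SuppDisk f) (φ : ℝ) :
    ∫⁻ s, ENNReal.ofReal (Radon f s φ ^ 2) ≤ 2 * ∫⁻ x, ENNReal.ofReal (f x ^ 2) := by
  have hF : Measurable fun x => ENNReal.ofReal (f x ^ 2) := (hf.pow_const 2).ennreal_ofReal
  calc _ ≤ ∫⁻ s, 2 * ∫⁻ t : ℝ, ENNReal.ofReal (f (s • dirv φ + t • dirp φ) ^ 2) :=
        lintegral_mono fun s => ofReal_sq_radon_le hf hsupp s φ
    _ = 2 * ∫⁻ z : ℝ × ℝ, ENNReal.ofReal (f (z.1 • dirv φ + z.2 • dirp φ) ^ 2) := by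
        rw [lintegral_const_mul' _ _ ENNReal.ofNat_ne_top, Measure.volume_eq_prod,
          lintegral_prod (fun z : ℝ × ℝ => ENNReal.ofReal (f (z.1 • dirv φ + z.2 • dirp φ) ^ 2))
            (hF.comp (measurePreserving_rotation φ).measurable).aemeasurable]
    _ = _ := by
        rw [(measurePreserving_rotation φ).lintegral_comp hF]

theorem sinoEnergy_radon_ne_top (hf : Measurable f) (hsupp : SuppDisk f) (hL2 : L2Img f) :
    sinoEnergy (Radon f) ≠ ⊤ := by
  refine ne_top_of_le_ne_top ?_ (setLIntegral_mono' measurableSet_Ioc fun φ _ =>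
    lintegral_sq_radon_le hf hsupp φ)
  rw [setLIntegral_const, Real.volume_Ioc]
  exact ENNReal.mul_ne_top (ENNReal.mul_ne_top ENNReal.ofNat_ne_top
    hL2.integrable_sq.lintegral_lt_top.ne) ENNReal.ofReal_ne_top

theorem SuppDisk.exists_measurable_ae_eq (hsupp : SuppDisk f) (hL2 : L2Img f) :
    ∃ f₀, Measurable f₀ ∧ SuppDisk f₀ ∧ f =ᵐ[volume] f₀ := by
  have hdisk : MeasurableSet unitDisk := measurableSet_lt (by fun_prop) measurable_const
  refine ⟨unitDisk.indicator (hL2.1.mk f), hL2.1.stronglyMeasurable_mk.measurable.indicator hdisk,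
    fun x hx => indicator_of_notMem hx _, ?_⟩
  filter_upwards [hL2.1.ae_eq_mk] with x hx
  by_cases hxd : x ∈ unitDisk
  · rw [indicator_of_mem hxd, hx]
  · rw [indicator_of_notMem hxd, hsupp x hxd]

end RadonTransform

section AeCongr

variable {g₁ g₂ : ℝ → ℝ → ℝ}

theorem nSinoD_congr_ae (h : ∀ φ, (fun s => g₁ s φ) =ᵐ[volume] fun s => g₂ s φ) :
    nSinoD g₁ = nSinoD g₂ := by
  simp only [nSinoD]
  congr 1
  refine integral_congr_ae (ae_of_all _ fun φ => integral_congr_ae (ae_restrict_of_ae ?_))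
  filter_upwards [h φ] with s hs
  rw [hs]

theorem modCont_congr_ae (h : ∀ φ, (fun s => g₁ s φ) =ᵐ[volume] fun s => g₂ s φ) (a γ : ℝ) :
    modCont g₁ a γ = modCont g₂ a γ := by
  simp only [modCont]
  congr 1
  refine integral_congr_ae (ae_of_all _ fun φ => integral_congr_ae ?_)
  filter_upwards [h φ, (measurePreserving_add_right volume a).quasiMeasurePreserving.ae_eq_comp
    (h (φ + γ))] with s hs hsa
  simp only [Function.comp_apply] at hsa
  rw [hs, hsa]

theorem supMod_congr_ae (h : ∀ φ, (fun s => g₁ s φ) =ᵐ[volume] fun s => g₂ s φ) (r : ℝ) :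
    supMod g₁ r = supMod g₂ r := by
  simp only [supMod, modCont_congr_ae h]

end AeCongr

/-- `‖R_{δ_s} f − R f‖_{L²(Ω')} ≤ C sup_{|h| < (3/2)δ_s} ω_{R f}(h, 0)`. -/
theorem radon_detector_discretization :
    ∃ C : ℝ, 0 < C ∧ ∀ (δs : ℝ) (P : ℕ), 0 < δs → CoversI δs P →
      ∀ f : ℝ × ℝ → ℝ, SuppDisk f → L2Img f →
        nSinoD (fun s φ => RadonS δs P f s φ - Radon f s φ) ≤
          C * supMod (Radon f) (3 / 2 * δs) := by
  refine ⟨√3, by positivity, fun δs P hδ hcov f hsupp hL2 => ?_⟩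
  obtain ⟨f₀, hf₀, hsupp₀, hff₀⟩ := hsupp.exists_measurable_ae_eq hL2
  have hR := radon_ae_eq_of_ae_eq hff₀
  have hRS : ∀ φ, (fun s => RadonS δs P f s φ - Radon f s φ) =ᵐ[volume]
      fun s => detectorAverage δs P (fun t => Radon f₀ t φ) s - Radon f₀ s φ := fun φ => by
    filter_upwards [hR φ] with s hs
    rw [← hs, ← detectorAverage_congr_ae (hR φ)]
    rfl
  rw [nSinoD_congr_ae hRS, supMod_congr_ae hR]
  exact nSinoD_detectorAverage_sub_le (measurable_uncurry_radon hf₀)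
    (sinoEnergy_radon_ne_top hf₀ hsupp₀ (hL2.ae_eq hff₀)) hδ hcov

end
end
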